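/- arXiv:1804.08083 — 4 statements merged into one kernel-verified Lean document; each statement's English description precedes it below -/
import Mathlib

section
/- Let V be a Hilbert space of vector fields continuously embedded in C^1_0(ℝ^d,ℝ^d) with reproducing kernel K, and let F: V → ℝ be of the form F(v) = λ‖v‖_V² /2 + G(ξ v) where λ > 0, ξ: V → Q is a bounded linear map into a Banach space Q and G: Q → ℝ is Fréchet differentiable. Then any minimizer v of F satisfies v = -λ^{-1} K ξ* dG(ξ v); in particular v lies in the image of K ξ*. -/
open scoped RealInnerProductSpace

/-! At a minimizer the Fréchet derivative `λ ⟪v, ·⟫ + dG(ξ v) ∘ ξ` of `F` vanishes. Its second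
term is the functional `ξ* dG(ξ v)`, which the Riesz isometry `K` sends back into `V`, so
`λ v + K ξ* dG(ξ v) = 0`. -/

theorem hasFDerivAt_mul_norm_sq_div_two {V : Type*} [NormedAddCommGroup V] [InnerProductSpace ℝ V]
    (lam : ℝ) (v : V) :
    HasFDerivAt (fun w : V => lam * ‖w‖ ^ 2 / 2) (lam • innerSL ℝ v) v := by
  have h := (hasStrictFDerivAt_norm_sq v).hasFDerivAt.const_mul (lam / 2)
  refine (h.congr_fderiv ?_).congr_of_eventuallyEq (.of_forall fun w => by ring)
  rw [two_nsmul, ← two_smul ℝ, smul_smul, div_mul_cancel₀ lam two_ne_zero]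

theorem IsLocalMin.smul_add_toDual_symm_eq_zero {V : Type*} [NormedAddCommGroup V]
    [InnerProductSpace ℝ V] [CompleteSpace V] {f : V → ℝ} {f' : V →L[ℝ] ℝ} {lam : ℝ} {v : V}
    (hmin : IsLocalMin (fun w => lam * ‖w‖ ^ 2 / 2 + f w) v) (hf : HasFDerivAt f f' v) :
    lam • v + (InnerProductSpace.toDual ℝ V).symm f' = 0 := by
  have hcrit := hmin.hasFDerivAt_eq_zero ((hasFDerivAt_mul_norm_sq_div_two lam v).add hf)
  refine ext_inner_right ℝ fun w => ?_
  simpa [inner_add_left, real_inner_smul_left] using DFunLike.congr_fun hcrit w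

/-- any minimizer of `v ↦ λ‖v‖²/2 + G(ξ v)` satisfies
`v = -λ⁻¹ K ξ* dG(ξ v)`; in particular it lies in the image of `K ξ*`. -/
theorem stmt_1 {V Q : Type*} [NormedAddCommGroup V] [InnerProductSpace ℝ V] [CompleteSpace V]
    [NormedAddCommGroup Q] [NormedSpace ℝ Q]
    (ξ : V →L[ℝ] Q) (G : Q → ℝ) (dG : Q → (Q →L[ℝ] ℝ))
    (hG : ∀ q : Q, HasFDerivAt G (dG q) q)
    (lam : ℝ) (hlam : 0 < lam)
    (v : V)
    (hmin : ∀ w : V, lam * ‖v‖ ^ 2 / 2 + G (ξ v) ≤ lam * ‖w‖ ^ 2 / 2 + G (ξ w)) :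
    v = -(lam⁻¹) • (InnerProductSpace.toDual ℝ V).symm ((dG (ξ v)).comp ξ) := by
  have hcrit := IsLocalMin.smul_add_toDual_symm_eq_zero (f := fun w => G (ξ w))
    (Filter.Eventually.of_forall hmin) ((hG (ξ v)).comp v ξ.hasFDerivAt)
  rw [neg_smul, ← smul_neg, ← eq_neg_of_add_eq_zero_left hcrit, inv_smul_smul₀ hlam.ne']
end

section
/- The seminorm |||h|||_q² = (1/ℓ(q))∫₀^{ℓ(q)} |∂_s h|² ds − ((1/ℓ(q))∫₀^{ℓ(q)} ∂_s hᵀ T ds)² − ((1/ℓ(q))∫₀^{ℓ(q)} ∂_s hᵀ N ds)² vanishes on infinitesimal similarity transformations: if h(s) = μ q(s) + A q(s) + b with μ ∈ ℝ, A skew-symmetric and b ∈ ℝ², then |||h|||_q = 0. -/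
open scoped RealInnerProductSpace

/-!
Differentiating the similarity transformation gives `∂ₛh = μT + AT`. A skew map of the plane is a
multiple `a` of the quarter turn `T ↦ N`, so `∂ₛh` has the constant components `μ` along `T` and
`a` along `N`. As `(T, N)` is an orthonormal frame, `|∂ₛh|² = μ² + a²`, and every term of the
seminorm is the mean of a constant: `μ² + a² − μ² − a² = 0`.
-/

local notation "ℝ²" => EuclideanSpace ℝ (Fin 2)

theorem inner_eq_two_coords (x y : ℝ²) : ⟪x, y⟫ = x 0 * y 0 + x 1 * y 1 := by
  simp [PiLp.inner_apply, Fin.sum_univ_two, mul_comm]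

theorem eq_single_zero_add_single_one (u : ℝ²) :
    u = u 0 • EuclideanSpace.single 0 1 + u 1 • EuclideanSpace.single 1 1 := by
  ext i
  fin_cases i <;> simp

theorem inner_eq_zero_of_rot {T N : ℝ²} (hN : N 0 = -T 1 ∧ N 1 = T 0) : ⟪T, N⟫ = 0 := by
  rw [inner_eq_two_coords, hN.1, hN.2]
  ring

theorem inner_sq_add_inner_sq_eq_norm_sq_mul_norm_sq {v T N : ℝ²}
    (hN : N 0 = -T 1 ∧ N 1 = T 0) : ⟪v, T⟫ ^ 2 + ⟪v, N⟫ ^ 2 = ‖v‖ ^ 2 * ‖T‖ ^ 2 := by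
  simp only [← real_inner_self_eq_norm_sq, inner_eq_two_coords, hN.1, hN.2]
  ring

theorem inner_self_eq_zero_of_skew {E : Type*} [NormedAddCommGroup E] [InnerProductSpace ℝ E]
    {A : E →ₗ[ℝ] E} (hskew : ∀ u w, ⟪A u, w⟫ = -⟪u, A w⟫) (u : E) : ⟪A u, u⟫ = 0 := by
  linarith [hskew u u, real_inner_comm u (A u)]

theorem inner_skew_apply_eq_mul_norm_sq {A : ℝ² →ₗ[ℝ] ℝ²}
    (hskew : ∀ u w, ⟪A u, w⟫ = -⟪u, A w⟫) {T N : ℝ²} (hN : N 0 = -T 1 ∧ N 1 = T 0) :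
    ⟪A T, N⟫ = ⟪A (EuclideanSpace.single 0 1), EuclideanSpace.single 1 1⟫ * ‖T‖ ^ 2 := by
  set e₀ : ℝ² := EuclideanSpace.single 0 1
  set e₁ : ℝ² := EuclideanSpace.single 1 1
  have hN' : N = -T 1 • e₀ + T 0 • e₁ := by
    rw [eq_single_zero_add_single_one N, hN.1, hN.2]
  have h00 := inner_self_eq_zero_of_skew hskew e₀
  have h11 := inner_self_eq_zero_of_skew hskew e₁
  have h10 : ⟪A e₁, e₀⟫ = -⟪A e₀, e₁⟫ := by rw [hskew, real_inner_comm]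
  calc ⟪A T, N⟫ = ⟪A (T 0 • e₀ + T 1 • e₁), -T 1 • e₀ + T 0 • e₁⟫ := by
        rw [← eq_single_zero_add_single_one T, hN']
    _ = ⟪A e₀, e₁⟫ * (T 0 ^ 2 + T 1 ^ 2) := by
        simp only [map_add, map_smul, inner_add_left, inner_add_right, inner_smul_left,
          inner_smul_right, h00, h11, h10, RCLike.conj_to_real]
        ring
    _ = ⟪A e₀, e₁⟫ * ‖T‖ ^ 2 := by
        rw [← real_inner_self_eq_norm_sq, inner_eq_two_coords T T]
        ring

theorem hasDerivAt_similarity {E : Type*} [NormedAddCommGroup E] [NormedSpace ℝ E]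
    [FiniteDimensional ℝ E] {q : ℝ → E} {T : E} {s : ℝ} (hq : HasDerivAt q T s)
    (μ : ℝ) (A : E →ₗ[ℝ] E) (b : E) :
    HasDerivAt (fun s => μ • q s + A (q s) + b) (μ • T + A T) s :=
  ((hq.const_smul μ).add
    ((LinearMap.toContinuousLinearMap A).hasFDerivAt.comp_hasDerivAt s hq)).add_const b

theorem one_div_mul_integral_const {ℓ : ℝ} (hℓ : ℓ ≠ 0) (c : ℝ) :
    (1 / ℓ) * ∫ _ in (0:ℝ)..ℓ, c = c := by
  rw [intervalIntegral.integral_const, smul_eq_mul, sub_zero]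
  field_simp

theorem stmt_5_general (ℓ : ℝ) (hℓ : 0 < ℓ)
    (q T N : ℝ → EuclideanSpace ℝ (Fin 2))
    (hq : ∀ s, HasDerivAt q (T s) s)
    (hT : ∀ s, ‖T s‖ = 1)
    (hN : ∀ s, N s 0 = -(T s 1) ∧ N s 1 = T s 0)
    (h dh : ℝ → EuclideanSpace ℝ (Fin 2))
    (hder : ∀ s, HasDerivAt h (dh s) s)
    (μ : ℝ) (A : (EuclideanSpace ℝ (Fin 2)) →ₗ[ℝ] (EuclideanSpace ℝ (Fin 2))) (b : EuclideanSpace ℝ (Fin 2))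
    (hskew : ∀ u w : EuclideanSpace ℝ (Fin 2), ⟪A u, w⟫ = -⟪u, A w⟫)
    (hform : ∀ s, h s = μ • q s + A (q s) + b) :
    (1 / ℓ) * (∫ s in (0:ℝ)..ℓ, ‖dh s‖ ^ 2)
      - ((1 / ℓ) * ∫ s in (0:ℝ)..ℓ, ⟪dh s, T s⟫) ^ 2
      - ((1 / ℓ) * ∫ s in (0:ℝ)..ℓ, ⟪dh s, N s⟫) ^ 2 = 0 := by
  set a := ⟪A (EuclideanSpace.single 0 1), EuclideanSpace.single 1 1⟫
  have hdh : ∀ s, dh s = μ • T s + A (T s) := fun s =>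
    (hder s).unique (funext hform ▸ hasDerivAt_similarity (hq s) μ A b)
  have htangential : ∀ s, ⟪dh s, T s⟫ = μ := fun s => by
    rw [hdh, inner_add_left, real_inner_smul_left, real_inner_self_eq_norm_sq, hT,
      inner_self_eq_zero_of_skew hskew]
    ring
  have hnormal : ∀ s, ⟪dh s, N s⟫ = a := fun s => by
    rw [hdh, inner_add_left, real_inner_smul_left, inner_eq_zero_of_rot (hN s),
      inner_skew_apply_eq_mul_norm_sq hskew (hN s), hT]
    ring
  have henergy : ∀ s, ‖dh s‖ ^ 2 = μ ^ 2 + a ^ 2 := fun s => by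
    have hframe := inner_sq_add_inner_sq_eq_norm_sq_mul_norm_sq (v := dh s) (hN s)
    rw [hT, htangential, hnormal] at hframe
    linarith
  simp_rw [henergy, htangential, hnormal, one_div_mul_integral_const hℓ.ne']
  ring

/-- the scale/rotation-invariant seminorm
`|||h|||_q² = (1/ℓ)∫|∂ₛh|² − ((1/ℓ)∫∂ₛhᵀT)² − ((1/ℓ)∫∂ₛhᵀN)²` vanishes on
infinitesimal similarity transformations `h = μ q + A q + b` with `A` skew. -/
theorem stmt_5 (ℓ : ℝ) (hℓ : 0 < ℓ)
    (q T N : ℝ → EuclideanSpace ℝ (Fin 2))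
    (hq : ∀ s, HasDerivAt q (T s) s)
    (hT : ∀ s, ‖T s‖ = 1)
    (hN : ∀ s, N s 0 = -(T s 1) ∧ N s 1 = T s 0)
    (hclosed : q 0 = q ℓ)
    (hinjOn : Set.InjOn q (Set.Ico 0 ℓ))
    (h dh : ℝ → EuclideanSpace ℝ (Fin 2))
    (hder : ∀ s, HasDerivAt h (dh s) s)
    (μ : ℝ) (A : (EuclideanSpace ℝ (Fin 2)) →ₗ[ℝ] (EuclideanSpace ℝ (Fin 2))) (b : EuclideanSpace ℝ (Fin 2))
    (hskew : ∀ u w : EuclideanSpace ℝ (Fin 2), ⟪A u, w⟫ = -⟪u, A w⟫)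
    (hform : ∀ s, h s = μ • q s + A (q s) + b) :
    (1 / ℓ) * (∫ s in (0:ℝ)..ℓ, ‖dh s‖ ^ 2)
      - ((1 / ℓ) * ∫ s in (0:ℝ)..ℓ, ⟪dh s, T s⟫) ^ 2
      - ((1 / ℓ) * ∫ s in (0:ℝ)..ℓ, ⟪dh s, N s⟫) ^ 2 = 0 :=
  stmt_5_general ℓ hℓ q T N hq hT hN h dh hder μ A b hskew hform
end

section
/- Invariance of the varifold inner product under reparametrization: with ⟨q, q₁⟩_χ = ∫∫ χ(q(u), q₁(u₁)) (1 + c (ν(u)ᵀν₁(u₁))²) |q'(u)||q'₁(u₁)| du du₁, one has ⟨q ∘ β, q₁⟩_χ = ⟨q, q₁⟩_χ for any C¹ diffeomorphism β of M, and consequently D(q∘β, q₁∘β₁) = D(q, q₁) where D(q,q₁) = ‖q‖_χ² − 2⟨q,q₁⟩_χ + ‖q₁‖_χ². -/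
open scoped RealInnerProductSpace

/-- The varifold inner product
`⟨q,q₁⟩_χ = ∫∫ χ(q(u),q₁(u₁)) (1 + c (ν(u)ᵀν₁(u₁))²) |q'(u)||q'₁(u₁)| du du₁`,
with Gaussian kernel `χ(x,y) = exp(−|x−y|²/2τ²)`, for curves parametrized over `[0,1]`
with given derivative `dq` and unit normal `ν`. -/
noncomputable def varifoldPair (τ c : ℝ) (q dq ν q₁ dq₁ ν₁ : ℝ → EuclideanSpace ℝ (Fin 2)) : ℝ :=
  ∫ u in (0:ℝ)..1, ∫ u₁ in (0:ℝ)..1,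
    Real.exp (-‖q u - q₁ u₁‖ ^ 2 / (2 * τ ^ 2))
      * (1 + c * (⟪ν u, ν₁ u₁⟫) ^ 2) * (‖dq u‖ * ‖dq₁ u₁‖)

lemma cov {g : ℝ → ℝ} (hg : Continuous g) {β dβ : ℝ → ℝ}
    (hβ : ∀ x, HasDerivAt β (dβ x) x) (hcβ : Continuous dβ) (hβd : ∀ x, dβ x ≠ 0)
    (hβends : (β 0 = 0 ∧ β 1 = 1) ∨ (β 0 = 1 ∧ β 1 = 0)) :
    ∫ u in (0:ℝ)..1, |dβ u| * g (β u) = ∫ x in (0:ℝ)..1, g x := by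
  have hcov : ∫ u in (0:ℝ)..1, dβ u * g (β u) = ∫ x in (β 0)..(β 1), g x := by
    simpa [smul_eq_mul] using
      intervalIntegral.integral_comp_smul_deriv (fun x _ => hβ x) hcβ.continuousOn hg
  have hsign : (∀ x, 0 < dβ x) ∨ (∀ x, dβ x < 0) := by
    by_cases h : 0 < dβ 0
    · left; intro x
      by_contra hx
      push_neg at hx
      have hx' : dβ x < 0 := lt_of_le_of_ne hx (hβd x)
      have h0 : (0:ℝ) ∈ Set.uIcc (dβ 0) (dβ x) := Set.mem_uIcc.2 (Or.inr ⟨hx'.le, h.le⟩)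
      obtain ⟨cc, -, hcc⟩ := intermediate_value_uIcc hcβ.continuousOn h0
      exact hβd cc hcc
    · right; intro x
      have h0' : dβ 0 < 0 := lt_of_le_of_ne (not_lt.1 h) (hβd 0)
      by_contra hx
      push_neg at hx
      have hx' : 0 < dβ x := lt_of_le_of_ne hx (Ne.symm (hβd x))
      have h0 : (0:ℝ) ∈ Set.uIcc (dβ 0) (dβ x) := Set.mem_uIcc.2 (Or.inl ⟨h0'.le, hx'.le⟩)
      obtain ⟨cc, -, hcc⟩ := intermediate_value_uIcc hcβ.continuousOn h0
      exact hβd cc hcc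
  rcases hsign with hpos | hneg
  · have hmono : StrictMono β := strictMono_of_hasDerivAt_pos hβ hpos
    have hends : β 0 = 0 ∧ β 1 = 1 := by
      rcases hβends with h | h
      · exact h
      · exfalso
        have := hmono (show (0:ℝ) < 1 by norm_num)
        rw [h.1, h.2] at this; linarith
    calc ∫ u in (0:ℝ)..1, |dβ u| * g (β u)
        = ∫ u in (0:ℝ)..1, dβ u * g (β u) := by
          apply intervalIntegral.integral_congr
          intro u _; simp only [abs_of_pos (hpos u)]
      _ = ∫ x in (β 0)..(β 1), g x := hcov
      _ = ∫ x in (0:ℝ)..1, g x := by rw [hends.1, hends.2]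
  · have hmono : StrictAnti β := by
      have : StrictMono (fun x => -β x) :=
        strictMono_of_hasDerivAt_pos (f' := fun x => -dβ x)
          (fun x => (hβ x).neg) (fun x => neg_pos.2 (hneg x))
      intro a b hab
      have := this hab
      simpa using this
    have hends : β 0 = 1 ∧ β 1 = 0 := by
      rcases hβends with h | h
      · exfalso
        have := hmono (show (0:ℝ) < 1 by norm_num)
        rw [h.1, h.2] at this; linarith
      · exact h
    calc ∫ u in (0:ℝ)..1, |dβ u| * g (β u)
        = ∫ u in (0:ℝ)..1, -(dβ u * g (β u)) := by
          apply intervalIntegral.integral_congr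
          intro u _; simp only [abs_of_neg (hneg u)]; ring
      _ = -∫ u in (0:ℝ)..1, dβ u * g (β u) := intervalIntegral.integral_neg
      _ = -∫ x in (β 0)..(β 1), g x := by rw [hcov]
      _ = ∫ x in (0:ℝ)..1, g x := by
          rw [hends.1, hends.2, intervalIntegral.integral_symm, neg_neg]

lemma inv2 (τ c : ℝ) (q dq ν q₁ dq₁ ν₁ : ℝ → EuclideanSpace ℝ (Fin 2))
    (hq₁c : Continuous q₁) (hcq₁ : Continuous dq₁) (hcν₁ : Continuous ν₁)
    {β₁ dβ₁ : ℝ → ℝ} (hβ₁ : ∀ x, HasDerivAt β₁ (dβ₁ x) x) (hcβ₁ : Continuous dβ₁)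
    (hβ₁d : ∀ x, dβ₁ x ≠ 0)
    (hβ₁ends : (β₁ 0 = 0 ∧ β₁ 1 = 1) ∨ (β₁ 0 = 1 ∧ β₁ 1 = 0)) :
    varifoldPair τ c q dq ν (q₁ ∘ β₁) (fun u => dβ₁ u • dq₁ (β₁ u)) (ν₁ ∘ β₁)
      = varifoldPair τ c q dq ν q₁ dq₁ ν₁ := by
  unfold varifoldPair
  apply intervalIntegral.integral_congr
  intro u _
  simp only
  have hg : Continuous fun y => Real.exp (-‖q u - q₁ y‖ ^ 2 / (2 * τ ^ 2))
      * (1 + c * (⟪ν u, ν₁ y⟫) ^ 2) * (‖dq u‖ * ‖dq₁ y‖) := by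
    apply Continuous.mul
    apply Continuous.mul
    · exact Real.continuous_exp.comp (by fun_prop)
    · exact continuous_const.add (continuous_const.mul
        ((Continuous.inner continuous_const hcν₁).pow 2))
    · fun_prop
  calc ∫ u₁ in (0:ℝ)..1, Real.exp (-‖q u - (q₁ ∘ β₁) u₁‖ ^ 2 / (2 * τ ^ 2))
          * (1 + c * (⟪ν u, (ν₁ ∘ β₁) u₁⟫) ^ 2) * (‖dq u‖ * ‖dβ₁ u₁ • dq₁ (β₁ u₁)‖)
      = ∫ u₁ in (0:ℝ)..1, |dβ₁ u₁| * (Real.exp (-‖q u - q₁ (β₁ u₁)‖ ^ 2 / (2 * τ ^ 2))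
          * (1 + c * (⟪ν u, ν₁ (β₁ u₁)⟫) ^ 2) * (‖dq u‖ * ‖dq₁ (β₁ u₁)‖)) := by
        apply intervalIntegral.integral_congr
        intro u₁ _
        simp only [Function.comp_apply, norm_smul, Real.norm_eq_abs]
        ring
    _ = _ := cov hg hβ₁ hcβ₁ hβ₁d hβ₁ends

lemma inv1 (τ c : ℝ) (q dq ν q₁ dq₁ ν₁ : ℝ → EuclideanSpace ℝ (Fin 2))
    (hqc : Continuous q) (hcq : Continuous dq) (hcν : Continuous ν)
    (hq₁c : Continuous q₁) (hcq₁ : Continuous dq₁) (hcν₁ : Continuous ν₁)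
    {β dβ : ℝ → ℝ} (hβ : ∀ x, HasDerivAt β (dβ x) x) (hcβ : Continuous dβ)
    (hβd : ∀ x, dβ x ≠ 0)
    (hβends : (β 0 = 0 ∧ β 1 = 1) ∨ (β 0 = 1 ∧ β 1 = 0)) :
    varifoldPair τ c (q ∘ β) (fun u => dβ u • dq (β u)) (ν ∘ β) q₁ dq₁ ν₁
      = varifoldPair τ c q dq ν q₁ dq₁ ν₁ := by
  set G : ℝ → ℝ := fun x => ∫ u₁ in (0:ℝ)..1,
    Real.exp (-‖q x - q₁ u₁‖ ^ 2 / (2 * τ ^ 2))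
      * (1 + c * (⟪ν x, ν₁ u₁⟫) ^ 2) * (‖dq x‖ * ‖dq₁ u₁‖) with hGdef
  have hF : Continuous (Function.uncurry fun x u₁ =>
      Real.exp (-‖q x - q₁ u₁‖ ^ 2 / (2 * τ ^ 2))
        * (1 + c * (⟪ν x, ν₁ u₁⟫) ^ 2) * (‖dq x‖ * ‖dq₁ u₁‖)) := by
    unfold Function.uncurry
    apply Continuous.mul
    apply Continuous.mul
    · exact Real.continuous_exp.comp (by fun_prop)
    · exact continuous_const.add (continuous_const.mul
        ((Continuous.inner (hcν.comp continuous_fst) (hcν₁.comp continuous_snd)).pow 2))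
    · fun_prop
  have hG : Continuous G :=
    intervalIntegral.continuous_parametric_intervalIntegral_of_continuous' hF 0 1
  calc varifoldPair τ c (q ∘ β) (fun u => dβ u • dq (β u)) (ν ∘ β) q₁ dq₁ ν₁
      = ∫ u in (0:ℝ)..1, |dβ u| * G (β u) := by
        unfold varifoldPair
        apply intervalIntegral.integral_congr
        intro u _
        simp only [hGdef]
        rw [← intervalIntegral.integral_const_mul]
        apply intervalIntegral.integral_congr
        intro u₁ _
        simp only [Function.comp_apply, norm_smul, Real.norm_eq_abs]
        ring
    _ = ∫ x in (0:ℝ)..1, G x := cov hG hβ hcβ hβd hβends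
    _ = varifoldPair τ c q dq ν q₁ dq₁ ν₁ := rfl

/-- invariance of the varifold inner product under reparametrization,
and the resulting bi-invariance of the discrepancy
`D(q,q₁) = ‖q‖_χ² − 2⟨q,q₁⟩_χ + ‖q₁‖_χ²`. -/
theorem stmt_8 (τ c : ℝ) (hτ : 0 < τ) (hc : 0 < c)
    (q q₁ dq dq₁ ν ν₁ : ℝ → EuclideanSpace ℝ (Fin 2))
    (hq : ∀ u, HasDerivAt q (dq u) u) (hq₁ : ∀ u, HasDerivAt q₁ (dq₁ u) u)
    (himm : ∀ u, dq u ≠ 0) (himm₁ : ∀ u, dq₁ u ≠ 0)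
    (hν : ∀ u, ‖ν u‖ = 1 ∧ ⟪ν u, dq u⟫ = 0)
    (hν₁ : ∀ u, ‖ν₁ u‖ = 1 ∧ ⟪ν₁ u, dq₁ u⟫ = 0)
    (hcq : Continuous dq) (hcq₁ : Continuous dq₁)
    (hcν : Continuous ν) (hcν₁ : Continuous ν₁)
    (β β₁ : ℝ → ℝ) (dβ dβ₁ : ℝ → ℝ)
    (hβ : ∀ x, HasDerivAt β (dβ x) x) (hβ₁ : ∀ x, HasDerivAt β₁ (dβ₁ x) x)
    (hcβ : Continuous dβ) (hcβ₁ : Continuous dβ₁)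
    (hβd : ∀ x, dβ x ≠ 0) (hβ₁d : ∀ x, dβ₁ x ≠ 0)
    (hβends : (β 0 = 0 ∧ β 1 = 1) ∨ (β 0 = 1 ∧ β 1 = 0))
    (hβ₁ends : (β₁ 0 = 0 ∧ β₁ 1 = 1) ∨ (β₁ 0 = 1 ∧ β₁ 1 = 0)) :
    varifoldPair τ c (q ∘ β) (fun u => dβ u • dq (β u)) (ν ∘ β) q₁ dq₁ ν₁
        = varifoldPair τ c q dq ν q₁ dq₁ ν₁ ∧
    varifoldPair τ c (q ∘ β) (fun u => dβ u • dq (β u)) (ν ∘ β)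
          (q ∘ β) (fun u => dβ u • dq (β u)) (ν ∘ β)
      - 2 * varifoldPair τ c (q ∘ β) (fun u => dβ u • dq (β u)) (ν ∘ β)
          (q₁ ∘ β₁) (fun u => dβ₁ u • dq₁ (β₁ u)) (ν₁ ∘ β₁)
      + varifoldPair τ c (q₁ ∘ β₁) (fun u => dβ₁ u • dq₁ (β₁ u)) (ν₁ ∘ β₁)
          (q₁ ∘ β₁) (fun u => dβ₁ u • dq₁ (β₁ u)) (ν₁ ∘ β₁)
      = varifoldPair τ c q dq ν q dq ν
        - 2 * varifoldPair τ c q dq ν q₁ dq₁ ν₁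
        + varifoldPair τ c q₁ dq₁ ν₁ q₁ dq₁ ν₁ := by
  
  have hqc : Continuous q := continuous_iff_continuousAt.2 fun x => (hq x).continuousAt
  have hq₁c : Continuous q₁ := continuous_iff_continuousAt.2 fun x => (hq₁ x).continuousAt
  refine ⟨inv1 τ c q dq ν q₁ dq₁ ν₁ hqc hcq hcν hq₁c hcq₁ hcν₁ hβ hcβ hβd hβends, ?_⟩
  rw [inv2 τ c (q ∘ β) (fun u => dβ u • dq (β u)) (ν ∘ β) q dq ν hqc hcq hcν hβ hcβ hβd hβends,
      inv2 τ c (q ∘ β) (fun u => dβ u • dq (β u)) (ν ∘ β) q₁ dq₁ ν₁ hq₁c hcq₁ hcν₁ hβ₁ hcβ₁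
        hβ₁d hβ₁ends,
      inv2 τ c (q₁ ∘ β₁) (fun u => dβ₁ u • dq₁ (β₁ u)) (ν₁ ∘ β₁) q₁ dq₁ ν₁ hq₁c hcq₁ hcν₁ hβ₁
        hcβ₁ hβ₁d hβ₁ends,
      inv1 τ c q dq ν q dq ν hqc hcq hcν hqc hcq hcν hβ hcβ hβd hβends,
      inv1 τ c q dq ν q₁ dq₁ ν₁ hqc hcq hcν hq₁c hcq₁ hcν₁ hβ hcβ hβd hβends,
      inv1 τ c q₁ dq₁ ν₁ q₁ dq₁ ν₁ hq₁c hcq₁ hcν₁ hq₁c hcq₁ hcν₁ hβ₁ hcβ₁ hβ₁d hβ₁ends]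
end

section
/- For the kernel Γ(x) = P_c(|x|) e^{-|x|} on ℝ^d associated with the norm ‖v‖_V² = ∫ |(Id − a²Δ)^{m/2} v|² dx with c = m − (d+1)/2 a positive integer and P_c the normalized reverse Bessel polynomial of degree c, Γ is C^c at x = 0 and C^∞ on ℝ^d \ {0}, Γ(0) = 1, and Γ(x) → 0 as |x| → ∞. -/
/-!
The reverse Bessel polynomials satisfy `θ_{n+1}' = θ_{n+1} - X θ_n`, so the profile
`g_n(t) = θ_n(t) e^{-t}` satisfies `g_{n+1}'(t) = -t g_n(t)`. For the radial function
`K_n(x) = g_n(‖x‖)` this becomes `∇K_{n+1}(x) = -K_n(x) x`, also at `x = 0`, where the norm is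
not differentiable but `g_{n+1}'(0) = 0`. So `K_{n+1}` has one more derivative than `K_n`, and
induction from the continuity of `K_0` gives that `K_n` is `C^n`. Away from `0` the norm is smooth, and `g_n → 0` at infinity
because the exponential beats every polynomial.
-/

open Polynomial

/-- The reverse Bessel polynomials `θ₀ = 1`, `θ₁ = X + 1`,
`θ_{n+2} = (2n+3) θ_{n+1} + X² θ_n`. -/
noncomputable def revBessel : ℕ → Polynomial ℝ
  | 0 => 1
  | 1 => X + 1
  | (n + 2) => C (2 * (n : ℝ) + 3) * revBessel (n + 1) + X ^ 2 * revBessel n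

theorem derivative_revBessel_succ :
    ∀ n : ℕ, derivative (revBessel (n + 1)) = revBessel (n + 1) - X * revBessel n
  | 0 => by simp [revBessel]
  | 1 => by
    simp only [revBessel, CharP.cast_eq_zero, mul_zero, zero_add, map_ofNat, mul_one,
      derivative_mul, derivative_ofNat, zero_mul, derivative_X, derivative_one,
      add_zero, derivative_X_pow_succ, Nat.cast_one, map_add, map_one, pow_one]
    ring
  | n + 2 => by
    have ih₁ := derivative_revBessel_succ (n + 1)
    have ih₀ := derivative_revBessel_succ n
    rw [revBessel.eq_3 (n + 1), revBessel.eq_3 n] at *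
    simp only [derivative_add, derivative_mul, derivative_C, derivative_X_pow, ih₁, ih₀]
    push_cast
    simp only [map_add, map_mul, map_ofNat, map_one, map_natCast]
    ring

theorem revBessel_eval_zero_pos : ∀ n : ℕ, 0 < (revBessel n).eval 0
  | 0 => by simp [revBessel]
  | 1 => by simp [revBessel]
  | n + 2 => by
    have := revBessel_eval_zero_pos (n + 1)
    simp only [revBessel, eval_add, eval_mul, eval_C, eval_pow, eval_X, zero_pow two_ne_zero,
      zero_mul, add_zero]
    positivity

noncomputable def revBesselExp (n : ℕ) (t : ℝ) : ℝ := (revBessel n).eval t * Real.exp (-t)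

theorem contDiff_revBesselExp (n : ℕ) {k : WithTop ℕ∞} : ContDiff ℝ k (revBesselExp n) :=
  ((revBessel n).contDiff_aeval k).mul (Real.contDiff_exp.comp contDiff_neg)

theorem hasDerivAt_revBesselExp_succ (n : ℕ) (t : ℝ) :
    HasDerivAt (revBesselExp (n + 1)) (t * -revBesselExp n t) t := by
  have h := ((revBessel (n + 1)).hasDerivAt t).mul (hasDerivAt_neg t).exp
  rw [derivative_revBessel_succ] at h
  refine h.congr_deriv ?_
  simp only [revBesselExp, eval_sub, eval_mul, eval_X]
  ring

theorem tendsto_revBesselExp_atTop (n : ℕ) :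
    Filter.Tendsto (revBesselExp n) Filter.atTop (nhds 0) :=
  (revBessel n).tendsto_div_exp_atTop.congr fun t => by
    rw [revBesselExp, Real.exp_neg, div_eq_mul_inv]

section RadialFunctions

variable {E : Type*} [NormedAddCommGroup E] [InnerProductSpace ℝ E]

theorem hasFDerivAt_norm_of_ne_zero {x : E} (hx : x ≠ 0) :
    HasFDerivAt (‖·‖) (‖x‖⁻¹ • innerSL ℝ x) x := by
  have h := (Real.hasDerivAt_sqrt (by positivity : ‖x‖ ^ 2 ≠ 0)).comp_hasFDerivAt x
    (hasStrictFDerivAt_norm_sq x).hasFDerivAt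
  rw [show (‖·‖) = Real.sqrt ∘ fun y : E => ‖y‖ ^ 2 by ext; simp]
  refine h.congr_fderiv ?_
  ext y
  simp only [Real.sqrt_sq (norm_nonneg x), smul_apply, coe_innerSL_apply,
    nsmul_eq_mul, Nat.cast_ofNat, smul_eq_mul]
  field_simp

theorem HasDerivAt.hasFDerivAt_comp_norm {f g : ℝ → ℝ} {x : E}
    (hf : HasDerivAt f (‖x‖ * g ‖x‖) ‖x‖) :
    HasFDerivAt (fun y : E => f ‖y‖) (g ‖x‖ • innerSL ℝ x) x := by
  rcases eq_or_ne x 0 with rfl | hx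
  · simp only [norm_zero, zero_mul, map_zero, smul_zero] at hf ⊢
    rw [hasFDerivAt_iff_isLittleO_nhds_zero]
    have hf₀ : (fun t : ℝ => f t - f 0) =o[nhds 0] fun t => t := by
      simpa using hf.isLittleO
    have h := (hf₀.comp_tendsto tendsto_norm_zero).trans_isBigO
      (Asymptotics.isBigO_norm_left.mpr (Asymptotics.isBigO_refl (fun h : E => h) _))
    simpa [Function.comp_def] using h
  · refine (hf.comp_hasFDerivAt x (hasFDerivAt_norm_of_ne_zero hx)).congr_fderiv ?_
    rw [smul_smul, mul_right_comm, mul_inv_cancel₀ (norm_ne_zero_iff.mpr hx), one_mul]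

theorem hasFDerivAt_revBesselExp_norm_succ (n : ℕ) (x : E) :
    HasFDerivAt (fun y : E => revBesselExp (n + 1) ‖y‖)
      (-revBesselExp n ‖x‖ • innerSL ℝ x) x :=
  (hasDerivAt_revBesselExp_succ n ‖x‖).hasFDerivAt_comp_norm (g := fun t => -revBesselExp n t)

theorem contDiff_revBesselExp_norm :
    ∀ n : ℕ, ContDiff ℝ n fun x : E => revBesselExp n ‖x‖
  | 0 => contDiff_zero.mpr ((contDiff_revBesselExp 0 (k := 0)).continuous.comp continuous_norm)
  | n + 1 => by
    rw [Nat.cast_succ, contDiff_succ_iff_fderiv]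
    refine ⟨fun x => (hasFDerivAt_revBesselExp_norm_succ n x).differentiableAt, by simp, ?_⟩
    rw [show fderiv ℝ (fun x : E => revBesselExp (n + 1) ‖x‖) = _ from
      funext fun x => (hasFDerivAt_revBesselExp_norm_succ n x).fderiv]
    exact (contDiff_revBesselExp_norm n).neg.smul (innerSL ℝ).contDiff

end RadialFunctions

theorem stmt_16_general (d c : ℕ)
    (Γ : EuclideanSpace ℝ (Fin d) → ℝ)
    (hΓ : ∀ x, Γ x = ((revBessel c).eval 0)⁻¹ * (revBessel c).eval ‖x‖ * Real.exp (-‖x‖)) :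
    ContDiffAt ℝ c Γ 0 ∧
    (∀ x ≠ 0, ContDiffAt ℝ (⊤ : ℕ∞) Γ x) ∧
    Γ 0 = 1 ∧
    Filter.Tendsto Γ (Filter.cocompact _) (nhds 0) := by
  obtain rfl : Γ = fun x => ((revBessel c).eval 0)⁻¹ * revBesselExp c ‖x‖ := by
    funext x; rw [hΓ, revBesselExp, mul_assoc]
  refine ⟨?_, fun x hx => ?_, ?_, ?_⟩
  · exact (contDiff_const.mul (contDiff_revBesselExp_norm c)).contDiffAt
  · exact contDiffAt_const.mul
      ((contDiff_revBesselExp c).contDiffAt.comp x (contDiffAt_norm ℝ hx))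
  · simp [revBesselExp, (revBessel_eval_zero_pos c).ne']
  · simpa using ((tendsto_revBesselExp_atTop c).comp tendsto_norm_cocompact_atTop).const_mul
      ((revBessel c).eval 0)⁻¹

/-- for `Γ(x) = P_c(|x|)e^{-|x|}` with `P_c` the reverse Bessel polynomial
of degree `c` normalized so that `P_c(0) = 1`, and `c = m − (d+1)/2` a positive integer
(the kernel of the Sobolev norm of order `m` on `ℝ^d`), the function `Γ` is `C^c` at
`x = 0`, `C^∞` away from `0`, satisfies `Γ(0) = 1`, and tends to `0` at infinity. -/
theorem stmt_16 (d m c : ℕ) (hc : 0 < c)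
    (hrel : (c : ℝ) = (m : ℝ) - ((d : ℝ) + 1) / 2)
    (Γ : EuclideanSpace ℝ (Fin d) → ℝ)
    (hΓ : ∀ x, Γ x = ((revBessel c).eval 0)⁻¹ * (revBessel c).eval ‖x‖ * Real.exp (-‖x‖)) :
    ContDiffAt ℝ c Γ 0 ∧
    (∀ x ≠ 0, ContDiffAt ℝ (⊤ : ℕ∞) Γ x) ∧
    Γ 0 = 1 ∧
    Filter.Tendsto Γ (Filter.cocompact _) (nhds 0) :=
  stmt_16_general d c Γ hΓ
end
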